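/- As formal power series in q, the product ∏_{λ=0}^{2} t_λ equals t, where t_λ(q) = ω^λ q^{1/3} ∏_{n≥1} (1-q^{4n})⁴(1-ω^{2λn} q^{2n/3})² / ((1-q^{2n})²(1-ω^{4λn} q^{4n/3})⁴) and t(q) = q ∏_{n≥1} (1-q^{12n})⁴(1-q^{2n})² / ((1-q^{6n})²(1-q^{4n})⁴). Equivalently, substituting, ∏_{λ=0}^2 t((τ+λ)/3) = t(τ). -/

import Mathlib

open Complex



private lemma hasProd_div' {f g : ℕ → ℂ} {a b : ℂ} (hf : HasProd f a) (hg : HasProd g b)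
    (hb : b ≠ 0) : HasProd (fun n => f n / g n) (a / b) := by
  have := Filter.Tendsto.div hf hg hb
  simpa [HasProd, Finset.prod_div_distrib, Pi.div_def] using this

private lemma hasProd_pow' {f : ℕ → ℂ} {a : ℂ} (hf : HasProd f a) (k : ℕ) :
    HasProd (fun n => f n ^ k) (a ^ k) := by
  induction k with
  | zero => simpa using hasProd_one
  | succ k ih => simpa [pow_succ] using ih.mul hf

private lemma summable_log_aux {x : ℂ} (hx : ‖x‖ < 1) (c : ℕ → ℂ)
    (hc : ∀ n, ‖c n‖ ≤ ‖x‖ ^ (n + 1)) : Summable fun n => Complex.log (1 - c n) := by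
  obtain ⟨N, hN⟩ : ∃ N : ℕ, ‖x‖ ^ N < 1/2 := exists_pow_lt_of_lt_one (by norm_num) hx
  have hgeo : Summable (fun n : ℕ => (3/2 : ℝ) * ‖x‖ ^ (n + 1)) := by
    apply Summable.mul_left
    have := summable_geometric_of_lt_one (norm_nonneg x) hx
    exact (summable_nat_add_iff 1).mpr this
  apply Summable.of_norm_bounded_eventually_nat hgeo
  filter_upwards [Filter.eventually_ge_atTop N] with n hn
  have hsmall : ‖c n‖ ≤ 1/2 := by
    refine le_trans (hc n) (le_trans ?_ hN.le)
    exact pow_le_pow_of_le_one (norm_nonneg x) hx.le (by omega)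
  have : ‖Complex.log (1 + (-(c n)))‖ ≤ 3/2 * ‖-(c n)‖ :=
    norm_log_one_add_half_le_self (by simpa using hsmall)
  simpa [sub_eq_add_neg] using this.trans (by simpa using mul_le_mul_of_nonneg_left (hc n) (by norm_num : (0:ℝ) ≤ 3/2))

private lemma basic_aux {x : ℂ} (hx : ‖x‖ < 1) (c : ℕ → ℂ)
    (hc : ∀ n, ‖c n‖ ≤ ‖x‖ ^ (n + 1)) :
    HasProd (fun n => 1 - c n) (∏' n, (1 - c n)) ∧ (∏' n : ℕ, (1 - c n)) ≠ 0 := by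
  have hne : ∀ n, 1 - c n ≠ 0 := by
    intro n h
    have h1 : ‖c n‖ < 1 := lt_of_le_of_lt (hc n) (pow_lt_one₀ (norm_nonneg x) hx (Nat.succ_ne_zero n))
    have : c n = 1 := by linear_combination -h
    rw [this] at h1; simp at h1
  have hsum := summable_log_aux hx c hc
  have hmult : Multipliable fun n => 1 - c n :=
    Complex.multipliable_of_summable_log hsum
  refine ⟨hmult.hasProd, ?_⟩
  have : Complex.exp (∑' i, Complex.log (1 - c i)) = ∏' i, (1 - c i) :=
    Complex.cexp_tsum_eq_tprod hne hsum
  rw [← this]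
  exact Complex.exp_ne_zero _

private lemma hasProd_ap3 {h g : ℕ → ℂ} {A : ℂ} (hg : HasProd g A)
    (hcomp : ∀ k, h (3 * k + 2) = g k) :
    HasProd (fun n => if 3 ∣ (n + 1) then h n else 1) A := by
  have hinj : Function.Injective (fun k : ℕ => 3 * k + 2) := by intro a b hab; simpa using hab
  rw [← hinj.hasProd_iff]
  · have heq : ((fun n => if 3 ∣ (n + 1) then h n else 1) ∘ (fun k : ℕ => 3 * k + 2)) = g := by
      funext k
      simp only [Function.comp]
      rw [if_pos ⟨k + 1, by ring⟩, hcomp]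
    rwa [heq]
  · intro n hn
    rw [if_neg]
    rintro ⟨t, ht⟩
    exact hn ⟨t - 1, show 3 * (t - 1) + 2 = n by omega⟩

private lemma cube_prod {a u : ℂ} (ha3 : a ^ 3 = 1) (ha : a ≠ 1) :
    (1 - u) * (1 - a * u) * (1 - a ^ 2 * u) = 1 - u ^ 3 := by
  have h : a ^ 2 + a + 1 = 0 := by
    have h2 : (a - 1) * (a ^ 2 + a + 1) = 0 := by linear_combination ha3
    rcases mul_eq_zero.mp h2 with h | h
    · exact absurd (by linear_combination h) ha
    · exact h
  linear_combination (u ^ 2 - u) * h + (u ^ 2 - u ^ 3) * ha3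

private lemma zeta_cube : Complex.exp (2 * Real.pi * Complex.I / 3) ^ 3 = 1 := by
  rw [← Complex.exp_nat_mul]
  rw [show ((3 : ℕ) : ℂ) * (2 * Real.pi * Complex.I / 3) = 2 * Real.pi * Complex.I by
    push_cast; ring]
  exact Complex.exp_two_pi_mul_I

private lemma zeta_mul3 (k : ℕ) : Complex.exp (2 * Real.pi * Complex.I / 3) ^ (3 * k) = 1 := by
  rw [pow_mul, zeta_cube, one_pow]

private lemma zeta_pow_ne_one {k : ℕ} (hk : ¬ (3 ∣ k)) :
    Complex.exp (2 * Real.pi * Complex.I / 3) ^ k ≠ 1 := by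
  rw [← Complex.exp_nat_mul]
  intro hone
  obtain ⟨n, hn⟩ := Complex.exp_eq_one_iff.mp hone
  have hpi : (Real.pi : ℂ) ≠ 0 := by exact_mod_cast Real.pi_ne_zero
  have hI : (Complex.I) ≠ 0 := Complex.I_ne_zero
  have h2 : (k : ℂ) * (2 * Real.pi * Complex.I) = (3 * n) * (2 * Real.pi * Complex.I) := by
    linear_combination 3 * hn
  have h3 : (k : ℂ) = 3 * n := by
    have hne : (2 * (Real.pi : ℂ) * Complex.I) ≠ 0 := by
      apply mul_ne_zero (mul_ne_zero (by norm_num) hpi) hI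
    exact mul_right_cancel₀ hne h2
  have h4 : (k : ℤ) = 3 * n := by exact_mod_cast h3
  exact hk (Int.ofNat_dvd.mp ⟨n, by exact_mod_cast h4⟩)

private lemma zeta_norm (k : ℕ) : ‖Complex.exp (2 * Real.pi * Complex.I / 3) ^ k‖ = 1 := by
  rw [norm_pow]
  rw [show (2 * (Real.pi : ℂ) * Complex.I / 3) = ((2 * Real.pi / 3 : ℝ) : ℂ) * Complex.I by
    push_cast; ring]
  rw [Complex.norm_exp_ofReal_mul_I, one_pow]


/-- The eta quotient `t = η₁₂⁴η₂²/(η₆²η₄⁴)` as a function of `τ`, written as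
`q · ∏_{n≥1} (1-q^{12n})⁴(1-q^{2n})² / ((1-q^{6n})²(1-q^{4n})⁴)` with
`q = e^{2πiτ}`. -/
noncomputable def etaQuotT (τ : ℂ) : ℂ :=
  Complex.exp (2 * Real.pi * Complex.I * τ) *
    ∏' n : ℕ,
      ((1 - Complex.exp (2 * Real.pi * Complex.I * τ) ^ (12 * (n + 1))) ^ 4 *
          (1 - Complex.exp (2 * Real.pi * Complex.I * τ) ^ (2 * (n + 1))) ^ 2) /
        ((1 - Complex.exp (2 * Real.pi * Complex.I * τ) ^ (6 * (n + 1))) ^ 2 *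
          (1 - Complex.exp (2 * Real.pi * Complex.I * τ) ^ (4 * (n + 1))) ^ 4)

set_option maxHeartbeats 2000000 in
/-- `∏_{λ=0}^{2} t((τ+λ)/3) = t(τ)` on the upper half-plane. -/
theorem prod_t_shift (τ : ℂ) (hτ : 0 < τ.im) :
    ∏ l ∈ Finset.range 3, etaQuotT ((τ + l) / 3) = etaQuotT τ := by
  set x : ℂ := Complex.exp (2 * Real.pi * Complex.I * (τ / 3)) with hxdef
  set ζ : ℂ := Complex.exp (2 * Real.pi * Complex.I / 3) with hζdef
  -- basic facts about x and ζ
  have hx : ‖x‖ < 1 := by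
    rw [hxdef, show 2 * (Real.pi : ℂ) * Complex.I * (τ / 3)
        = ((2 * Real.pi / 3 : ℝ) : ℂ) * τ * Complex.I by push_cast; ring,
      Complex.norm_exp, Real.exp_lt_one_iff]
    have : (((2 * Real.pi / 3 : ℝ) : ℂ) * τ * Complex.I).re = -(2 * Real.pi / 3 * τ.im) := by
      simp [Complex.mul_re, Complex.mul_im]
    rw [this]
    have hπ := Real.pi_pos
    nlinarith
  have hζ3 : ∀ k : ℕ, ζ ^ (3 * k) = 1 := by intro k; rw [hζdef]; exact zeta_mul3 k
  have hzne : ∀ k : ℕ, ¬ (3 ∣ k) → ζ ^ k ≠ 1 := by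
    intro k hk; rw [hζdef]; exact zeta_pow_ne_one hk
  have hznorm : ∀ k : ℕ, ‖ζ ^ k‖ = 1 := by intro k; rw [hζdef]; exact zeta_norm k
  have hE : ∀ l : ℕ, Complex.exp (2 * Real.pi * Complex.I * ((τ + (l : ℂ)) / 3)) = x * ζ ^ l := by
    intro l
    rw [hxdef, hζdef, ← Complex.exp_nat_mul, ← Complex.exp_add]
    congr 1
    ring
  have hq : Complex.exp (2 * Real.pi * Complex.I * τ) = x ^ 3 := by
    rw [hxdef, ← Complex.exp_nat_mul]
    congr 1
    push_cast
    ring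
  -- unfolding etaQuotT
  have key : ∀ t E : ℂ, Complex.exp (2 * Real.pi * Complex.I * t) = E →
      etaQuotT t = E * ∏' n : ℕ,
        ((1 - E ^ (12 * (n + 1))) ^ 4 * (1 - E ^ (2 * (n + 1))) ^ 2) /
          ((1 - E ^ (6 * (n + 1))) ^ 2 * (1 - E ^ (4 * (n + 1))) ^ 4) := by
    intro t E h
    simp only [etaQuotT, h]
  -- bounds
  have hbnd : ∀ a : ℕ, 1 ≤ a → ∀ n : ℕ, ‖x ^ (a * (n + 1))‖ ≤ ‖x‖ ^ (n + 1) := by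
    intro a ha n
    rw [norm_pow]
    exact pow_le_pow_of_le_one (norm_nonneg x) hx.le
      (le_mul_of_one_le_left (Nat.zero_le _) ha)
  have hbndζ : ∀ j a : ℕ, 1 ≤ a → ∀ n : ℕ,
      ‖ζ ^ (j * (n + 1)) * x ^ (a * (n + 1))‖ ≤ ‖x‖ ^ (n + 1) := by
    intro j a ha n
    rw [norm_mul, hznorm, one_mul]
    exact hbnd a ha n
  have hne_pow : ∀ N : ℕ, 1 ≤ N → (1 : ℂ) - x ^ N ≠ 0 := by
    intro N hN h
    have h1 : ‖x ^ N‖ < 1 := by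
      rw [norm_pow]; exact pow_lt_one₀ (norm_nonneg x) hx (by omega)
    have : x ^ N = 1 := by linear_combination -h
    rw [this] at h1; simp at h1
  -- basic infinite products
  have H6 := basic_aux hx (fun n => x ^ (6 * (n + 1))) (hbnd 6 (by norm_num))
  have H12 := basic_aux hx (fun n => x ^ (12 * (n + 1))) (hbnd 12 (by norm_num))
  have H18 := basic_aux hx (fun n => x ^ (18 * (n + 1))) (hbnd 18 (by norm_num))
  have H36 := basic_aux hx (fun n => x ^ (36 * (n + 1))) (hbnd 36 (by norm_num))
  have h6 : HasProd (fun n : ℕ => 1 - x ^ (6 * (n + 1))) (∏' n : ℕ, (1 - x ^ (6 * (n + 1)))) :=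
    H6.1
  have h6ne : (∏' n : ℕ, (1 - x ^ (6 * (n + 1)))) ≠ 0 := H6.2
  have h12 : HasProd (fun n : ℕ => 1 - x ^ (12 * (n + 1))) (∏' n : ℕ, (1 - x ^ (12 * (n + 1)))) :=
    H12.1
  have h12ne : (∏' n : ℕ, (1 - x ^ (12 * (n + 1)))) ≠ 0 := H12.2
  have h18 : HasProd (fun n : ℕ => 1 - x ^ (18 * (n + 1))) (∏' n : ℕ, (1 - x ^ (18 * (n + 1)))) :=
    H18.1
  have h18ne : (∏' n : ℕ, (1 - x ^ (18 * (n + 1)))) ≠ 0 := H18.2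
  have h36 : HasProd (fun n : ℕ => 1 - x ^ (36 * (n + 1))) (∏' n : ℕ, (1 - x ^ (36 * (n + 1)))) :=
    H36.1
  have h36ne : (∏' n : ℕ, (1 - x ^ (36 * (n + 1)))) ≠ 0 := H36.2
  have HB0 := basic_aux hx (fun n => ζ ^ (2 * 0 * (n + 1)) * x ^ (2 * (n + 1)))
    (hbndζ (2 * 0) 2 (by norm_num))
  have HB1 := basic_aux hx (fun n => ζ ^ (2 * 1 * (n + 1)) * x ^ (2 * (n + 1)))
    (hbndζ (2 * 1) 2 (by norm_num))
  have HB2 := basic_aux hx (fun n => ζ ^ (2 * 2 * (n + 1)) * x ^ (2 * (n + 1)))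
    (hbndζ (2 * 2) 2 (by norm_num))
  have HD0 := basic_aux hx (fun n => ζ ^ (4 * 0 * (n + 1)) * x ^ (4 * (n + 1)))
    (hbndζ (4 * 0) 4 (by norm_num))
  have HD1 := basic_aux hx (fun n => ζ ^ (4 * 1 * (n + 1)) * x ^ (4 * (n + 1)))
    (hbndζ (4 * 1) 4 (by norm_num))
  have HD2 := basic_aux hx (fun n => ζ ^ (4 * 2 * (n + 1)) * x ^ (4 * (n + 1)))
    (hbndζ (4 * 2) 4 (by norm_num))
  have hb0 : HasProd (fun n : ℕ => 1 - ζ ^ (2 * 0 * (n + 1)) * x ^ (2 * (n + 1)))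
      (∏' n : ℕ, (1 - ζ ^ (2 * 0 * (n + 1)) * x ^ (2 * (n + 1)))) := HB0.1
  have hb1 : HasProd (fun n : ℕ => 1 - ζ ^ (2 * 1 * (n + 1)) * x ^ (2 * (n + 1)))
      (∏' n : ℕ, (1 - ζ ^ (2 * 1 * (n + 1)) * x ^ (2 * (n + 1)))) := HB1.1
  have hb2 : HasProd (fun n : ℕ => 1 - ζ ^ (2 * 2 * (n + 1)) * x ^ (2 * (n + 1)))
      (∏' n : ℕ, (1 - ζ ^ (2 * 2 * (n + 1)) * x ^ (2 * (n + 1)))) := HB2.1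
  have hd0 : HasProd (fun n : ℕ => 1 - ζ ^ (4 * 0 * (n + 1)) * x ^ (4 * (n + 1)))
      (∏' n : ℕ, (1 - ζ ^ (4 * 0 * (n + 1)) * x ^ (4 * (n + 1)))) := HD0.1
  have hd0ne : (∏' n : ℕ, (1 - ζ ^ (4 * 0 * (n + 1)) * x ^ (4 * (n + 1)))) ≠ 0 := HD0.2
  have hd1 : HasProd (fun n : ℕ => 1 - ζ ^ (4 * 1 * (n + 1)) * x ^ (4 * (n + 1)))
      (∏' n : ℕ, (1 - ζ ^ (4 * 1 * (n + 1)) * x ^ (4 * (n + 1)))) := HD1.1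
  have hd1ne : (∏' n : ℕ, (1 - ζ ^ (4 * 1 * (n + 1)) * x ^ (4 * (n + 1)))) ≠ 0 := HD1.2
  have hd2 : HasProd (fun n : ℕ => 1 - ζ ^ (4 * 2 * (n + 1)) * x ^ (4 * (n + 1)))
      (∏' n : ℕ, (1 - ζ ^ (4 * 2 * (n + 1)) * x ^ (4 * (n + 1)))) := HD2.1
  have hd2ne : (∏' n : ℕ, (1 - ζ ^ (4 * 2 * (n + 1)) * x ^ (4 * (n + 1)))) ≠ 0 := HD2.2
  -- name the products
  set P6 : ℂ := ∏' n : ℕ, (1 - x ^ (6 * (n + 1))) with hP6def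
  set P12 : ℂ := ∏' n : ℕ, (1 - x ^ (12 * (n + 1))) with hP12def
  set P18 : ℂ := ∏' n : ℕ, (1 - x ^ (18 * (n + 1))) with hP18def
  set P36 : ℂ := ∏' n : ℕ, (1 - x ^ (36 * (n + 1))) with hP36def
  set B0 : ℂ := ∏' n : ℕ, (1 - ζ ^ (2 * 0 * (n + 1)) * x ^ (2 * (n + 1))) with hB0def
  set B1 : ℂ := ∏' n : ℕ, (1 - ζ ^ (2 * 1 * (n + 1)) * x ^ (2 * (n + 1))) with hB1def
  set B2 : ℂ := ∏' n : ℕ, (1 - ζ ^ (2 * 2 * (n + 1)) * x ^ (2 * (n + 1))) with hB2def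
  set D0 : ℂ := ∏' n : ℕ, (1 - ζ ^ (4 * 0 * (n + 1)) * x ^ (4 * (n + 1))) with hD0def
  set D1 : ℂ := ∏' n : ℕ, (1 - ζ ^ (4 * 1 * (n + 1)) * x ^ (4 * (n + 1))) with hD1def
  set D2 : ℂ := ∏' n : ℕ, (1 - ζ ^ (4 * 2 * (n + 1)) * x ^ (4 * (n + 1))) with hD2def
  -- HasProd for the three shifted bodies and the target body
  have hT0 : HasProd (fun n : ℕ =>
      ((1 - x ^ (12 * (n + 1))) ^ 4 * (1 - ζ ^ (2 * 0 * (n + 1)) * x ^ (2 * (n + 1))) ^ 2) /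
        ((1 - x ^ (6 * (n + 1))) ^ 2 * (1 - ζ ^ (4 * 0 * (n + 1)) * x ^ (4 * (n + 1))) ^ 4))
      ((P12 ^ 4 * B0 ^ 2) / (P6 ^ 2 * D0 ^ 4)) :=
    hasProd_div' ((hasProd_pow' h12 4).mul (hasProd_pow' hb0 2))
      ((hasProd_pow' h6 2).mul (hasProd_pow' hd0 4))
      (mul_ne_zero (pow_ne_zero _ h6ne) (pow_ne_zero _ hd0ne))
  have hT1 : HasProd (fun n : ℕ =>
      ((1 - x ^ (12 * (n + 1))) ^ 4 * (1 - ζ ^ (2 * 1 * (n + 1)) * x ^ (2 * (n + 1))) ^ 2) /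
        ((1 - x ^ (6 * (n + 1))) ^ 2 * (1 - ζ ^ (4 * 1 * (n + 1)) * x ^ (4 * (n + 1))) ^ 4))
      ((P12 ^ 4 * B1 ^ 2) / (P6 ^ 2 * D1 ^ 4)) :=
    hasProd_div' ((hasProd_pow' h12 4).mul (hasProd_pow' hb1 2))
      ((hasProd_pow' h6 2).mul (hasProd_pow' hd1 4))
      (mul_ne_zero (pow_ne_zero _ h6ne) (pow_ne_zero _ hd1ne))
  have hT2 : HasProd (fun n : ℕ =>
      ((1 - x ^ (12 * (n + 1))) ^ 4 * (1 - ζ ^ (2 * 2 * (n + 1)) * x ^ (2 * (n + 1))) ^ 2) /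
        ((1 - x ^ (6 * (n + 1))) ^ 2 * (1 - ζ ^ (4 * 2 * (n + 1)) * x ^ (4 * (n + 1))) ^ 4))
      ((P12 ^ 4 * B2 ^ 2) / (P6 ^ 2 * D2 ^ 4)) :=
    hasProd_div' ((hasProd_pow' h12 4).mul (hasProd_pow' hb2 2))
      ((hasProd_pow' h6 2).mul (hasProd_pow' hd2 4))
      (mul_ne_zero (pow_ne_zero _ h6ne) (pow_ne_zero _ hd2ne))
  have hTR : HasProd (fun n : ℕ =>
      ((1 - x ^ (36 * (n + 1))) ^ 4 * (1 - x ^ (6 * (n + 1))) ^ 2) /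
        ((1 - x ^ (18 * (n + 1))) ^ 2 * (1 - x ^ (12 * (n + 1))) ^ 4))
      ((P36 ^ 4 * P6 ^ 2) / (P18 ^ 2 * P12 ^ 4)) :=
    hasProd_div' ((hasProd_pow' h36 4).mul (hasProd_pow' h6 2))
      ((hasProd_pow' h18 2).mul (hasProd_pow' h12 4))
      (mul_ne_zero (pow_ne_zero _ h18ne) (pow_ne_zero _ h12ne))
  -- the arithmetic-progression products
  have hu2 : HasProd (fun n : ℕ => if 3 ∣ (n + 1) then (1 - x ^ (2 * (n + 1))) ^ 3 else 1)
      (P6 ^ 3) :=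
    hasProd_ap3 (hasProd_pow' h6 3) (fun k => by
      show (1 - x ^ (2 * (3 * k + 2 + 1))) ^ 3 = (1 - x ^ (6 * (k + 1))) ^ 3
      rw [show 2 * (3 * k + 2 + 1) = 6 * (k + 1) by ring])
  have hδ2 : HasProd (fun n : ℕ => if 3 ∣ (n + 1) then (1 - x ^ (6 * (n + 1))) else 1) P18 :=
    hasProd_ap3 h18 (fun k => by
      show (1 : ℂ) - x ^ (6 * (3 * k + 2 + 1)) = 1 - x ^ (18 * (k + 1))
      rw [show 6 * (3 * k + 2 + 1) = 18 * (k + 1) by ring])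
  have hu4 : HasProd (fun n : ℕ => if 3 ∣ (n + 1) then (1 - x ^ (4 * (n + 1))) ^ 3 else 1)
      (P12 ^ 3) :=
    hasProd_ap3 (hasProd_pow' h12 3) (fun k => by
      show (1 - x ^ (4 * (3 * k + 2 + 1))) ^ 3 = (1 - x ^ (12 * (k + 1))) ^ 3
      rw [show 4 * (3 * k + 2 + 1) = 12 * (k + 1) by ring])
  have hδ4 : HasProd (fun n : ℕ => if 3 ∣ (n + 1) then (1 - x ^ (12 * (n + 1))) else 1) P36 :=
    hasProd_ap3 h36 (fun k => by
      show (1 : ℂ) - x ^ (12 * (3 * k + 2 + 1)) = 1 - x ^ (36 * (k + 1))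
      rw [show 12 * (3 * k + 2 + 1) = 36 * (k + 1) by ring])
  -- the combined products over cube roots of unity
  have hc2' : HasProd (fun n : ℕ =>
      (1 - ζ ^ (2 * 0 * (n + 1)) * x ^ (2 * (n + 1))) *
        (1 - ζ ^ (2 * 1 * (n + 1)) * x ^ (2 * (n + 1))) *
        (1 - ζ ^ (2 * 2 * (n + 1)) * x ^ (2 * (n + 1)))) ((P6 * P6 ^ 3) / P18) := by
    have hfn : (fun n : ℕ =>
        (1 - ζ ^ (2 * 0 * (n + 1)) * x ^ (2 * (n + 1))) *
          (1 - ζ ^ (2 * 1 * (n + 1)) * x ^ (2 * (n + 1))) *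
          (1 - ζ ^ (2 * 2 * (n + 1)) * x ^ (2 * (n + 1)))) = fun n : ℕ =>
        ((1 - x ^ (6 * (n + 1))) * (if 3 ∣ (n + 1) then (1 - x ^ (2 * (n + 1))) ^ 3 else 1)) /
          (if 3 ∣ (n + 1) then (1 - x ^ (6 * (n + 1))) else 1) := by
      funext n
      by_cases h3 : 3 ∣ (n + 1)
      · rw [if_pos h3, if_pos h3]
        obtain ⟨k, hk⟩ := h3
        rw [hk]
        have z1 : ζ ^ (2 * 0 * (3 * k)) = 1 := by
          rw [show 2 * 0 * (3 * k) = 3 * 0 by ring]; exact hζ3 0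
        have z2 : ζ ^ (2 * 1 * (3 * k)) = 1 := by
          rw [show 2 * 1 * (3 * k) = 3 * (2 * k) by ring]; exact hζ3 _
        have z3 : ζ ^ (2 * 2 * (3 * k)) = 1 := by
          rw [show 2 * 2 * (3 * k) = 3 * (4 * k) by ring]; exact hζ3 _
        rw [z1, z2, z3]
        have h60 : (1 : ℂ) - x ^ (6 * (3 * k)) ≠ 0 := hne_pow _ (by omega)
        field_simp
      · rw [if_neg h3, if_neg h3]
        have ha3 : (ζ ^ (2 * 1 * (n + 1))) ^ 3 = 1 := by
          rw [← pow_mul, show 2 * 1 * (n + 1) * 3 = 3 * (2 * (n + 1)) by ring]; exact hζ3 _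
        have hane : ζ ^ (2 * 1 * (n + 1)) ≠ 1 := hzne _ (by omega)
        have hcube := cube_prod ha3 hane (u := x ^ (2 * (n + 1)))
        have z2 : (ζ ^ (2 * 1 * (n + 1))) ^ 2 = ζ ^ (2 * 2 * (n + 1)) := by
          rw [← pow_mul]; congr 1; ring
        have z4 : (x ^ (2 * (n + 1))) ^ 3 = x ^ (6 * (n + 1)) := by
          rw [← pow_mul]; congr 1; ring
        rw [z2, z4] at hcube
        have z0 : ζ ^ (2 * 0 * (n + 1)) = 1 := by
          rw [show 2 * 0 * (n + 1) = 3 * 0 by ring]; exact hζ3 0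
        rw [z0, ← hcube]
        ring
    rw [hfn]
    exact hasProd_div' (h6.mul hu2) hδ2 h18ne
  have hc4' : HasProd (fun n : ℕ =>
      (1 - ζ ^ (4 * 0 * (n + 1)) * x ^ (4 * (n + 1))) *
        (1 - ζ ^ (4 * 1 * (n + 1)) * x ^ (4 * (n + 1))) *
        (1 - ζ ^ (4 * 2 * (n + 1)) * x ^ (4 * (n + 1)))) ((P12 * P12 ^ 3) / P36) := by
    have hfn : (fun n : ℕ =>
        (1 - ζ ^ (4 * 0 * (n + 1)) * x ^ (4 * (n + 1))) *
          (1 - ζ ^ (4 * 1 * (n + 1)) * x ^ (4 * (n + 1))) *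
          (1 - ζ ^ (4 * 2 * (n + 1)) * x ^ (4 * (n + 1)))) = fun n : ℕ =>
        ((1 - x ^ (12 * (n + 1))) * (if 3 ∣ (n + 1) then (1 - x ^ (4 * (n + 1))) ^ 3 else 1)) /
          (if 3 ∣ (n + 1) then (1 - x ^ (12 * (n + 1))) else 1) := by
      funext n
      by_cases h3 : 3 ∣ (n + 1)
      · rw [if_pos h3, if_pos h3]
        obtain ⟨k, hk⟩ := h3
        rw [hk]
        have z1 : ζ ^ (4 * 0 * (3 * k)) = 1 := by
          rw [show 4 * 0 * (3 * k) = 3 * 0 by ring]; exact hζ3 0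
        have z2 : ζ ^ (4 * 1 * (3 * k)) = 1 := by
          rw [show 4 * 1 * (3 * k) = 3 * (4 * k) by ring]; exact hζ3 _
        have z3 : ζ ^ (4 * 2 * (3 * k)) = 1 := by
          rw [show 4 * 2 * (3 * k) = 3 * (8 * k) by ring]; exact hζ3 _
        rw [z1, z2, z3]
        have h120 : (1 : ℂ) - x ^ (12 * (3 * k)) ≠ 0 := hne_pow _ (by omega)
        field_simp
      · rw [if_neg h3, if_neg h3]
        have ha3 : (ζ ^ (4 * 1 * (n + 1))) ^ 3 = 1 := by
          rw [← pow_mul, show 4 * 1 * (n + 1) * 3 = 3 * (4 * (n + 1)) by ring]; exact hζ3 _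
        have hane : ζ ^ (4 * 1 * (n + 1)) ≠ 1 := hzne _ (by omega)
        have hcube := cube_prod ha3 hane (u := x ^ (4 * (n + 1)))
        have z2 : (ζ ^ (4 * 1 * (n + 1))) ^ 2 = ζ ^ (4 * 2 * (n + 1)) := by
          rw [← pow_mul]; congr 1; ring
        have z4 : (x ^ (4 * (n + 1))) ^ 3 = x ^ (12 * (n + 1)) := by
          rw [← pow_mul]; congr 1; ring
        rw [z2, z4] at hcube
        have z0 : ζ ^ (4 * 0 * (n + 1)) = 1 := by
          rw [show 4 * 0 * (n + 1) = 3 * 0 by ring]; exact hζ3 0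
        rw [z0, ← hcube]
        ring
    rw [hfn]
    exact hasProd_div' (h12.mul hu4) hδ4 h36ne
  -- rewriting the bodies of the shifted eta quotients
  have hbody : ∀ l : ℕ, (∏' n : ℕ,
      ((1 - (x * ζ ^ l) ^ (12 * (n + 1))) ^ 4 * (1 - (x * ζ ^ l) ^ (2 * (n + 1))) ^ 2) /
        ((1 - (x * ζ ^ l) ^ (6 * (n + 1))) ^ 2 * (1 - (x * ζ ^ l) ^ (4 * (n + 1))) ^ 4)) =
      ∏' n : ℕ,
      ((1 - x ^ (12 * (n + 1))) ^ 4 * (1 - ζ ^ (2 * l * (n + 1)) * x ^ (2 * (n + 1))) ^ 2) /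
        ((1 - x ^ (6 * (n + 1))) ^ 2 * (1 - ζ ^ (4 * l * (n + 1)) * x ^ (4 * (n + 1))) ^ 4) := by
    intro l
    apply tprod_congr
    intro n
    have e12 : (x * ζ ^ l) ^ (12 * (n + 1)) = x ^ (12 * (n + 1)) := by
      rw [mul_pow, ← pow_mul, show l * (12 * (n + 1)) = 3 * (l * (4 * (n + 1))) by ring, hζ3]
      exact mul_one _
    have e6 : (x * ζ ^ l) ^ (6 * (n + 1)) = x ^ (6 * (n + 1)) := by
      rw [mul_pow, ← pow_mul, show l * (6 * (n + 1)) = 3 * (l * (2 * (n + 1))) by ring, hζ3]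
      exact mul_one _
    have e2 : (x * ζ ^ l) ^ (2 * (n + 1)) = ζ ^ (2 * l * (n + 1)) * x ^ (2 * (n + 1)) := by
      rw [mul_pow, ← pow_mul, show l * (2 * (n + 1)) = 2 * l * (n + 1) by ring]
      exact mul_comm _ _
    have e4 : (x * ζ ^ l) ^ (4 * (n + 1)) = ζ ^ (4 * l * (n + 1)) * x ^ (4 * (n + 1)) := by
      rw [mul_pow, ← pow_mul, show l * (4 * (n + 1)) = 4 * l * (n + 1) by ring]
      exact mul_comm _ _
    rw [e12, e6, e2, e4]
  have hbodyR : (∏' n : ℕ,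
      ((1 - (x ^ 3) ^ (12 * (n + 1))) ^ 4 * (1 - (x ^ 3) ^ (2 * (n + 1))) ^ 2) /
        ((1 - (x ^ 3) ^ (6 * (n + 1))) ^ 2 * (1 - (x ^ 3) ^ (4 * (n + 1))) ^ 4)) =
      ∏' n : ℕ,
      ((1 - x ^ (36 * (n + 1))) ^ 4 * (1 - x ^ (6 * (n + 1))) ^ 2) /
        ((1 - x ^ (18 * (n + 1))) ^ 2 * (1 - x ^ (12 * (n + 1))) ^ 4) := by
    apply tprod_congr
    intro n
    rw [← pow_mul, ← pow_mul, ← pow_mul, ← pow_mul,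
      show 3 * (12 * (n + 1)) = 36 * (n + 1) by ring,
      show 3 * (2 * (n + 1)) = 6 * (n + 1) by ring,
      show 3 * (6 * (n + 1)) = 18 * (n + 1) by ring,
      show 3 * (4 * (n + 1)) = 12 * (n + 1) by ring]
  -- values of the combined products over cube roots of unity
  have hB : B0 * B1 * B2 = (P6 * P6 ^ 3) / P18 := ((hb0.mul hb1).mul hb2).unique hc2'
  have hD : D0 * D1 * D2 = (P12 * P12 ^ 3) / P36 := ((hd0.mul hd1).mul hd2).unique hc4'
  have h1c : (B0 ^ 2 * B1 ^ 2 * B2 ^ 2) * P18 ^ 2 = (P6 * P6 ^ 3) ^ 2 := by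
    calc (B0 ^ 2 * B1 ^ 2 * B2 ^ 2) * P18 ^ 2 = (B0 * B1 * B2) ^ 2 * P18 ^ 2 := by ring
    _ = ((P6 * P6 ^ 3) / P18) ^ 2 * P18 ^ 2 := by rw [hB]
    _ = (P6 * P6 ^ 3) ^ 2 := by rw [div_pow, div_mul_cancel₀ _ (pow_ne_zero 2 h18ne)]
  have h2c : (D0 ^ 4 * D1 ^ 4 * D2 ^ 4) * P36 ^ 4 = (P12 * P12 ^ 3) ^ 4 := by
    calc (D0 ^ 4 * D1 ^ 4 * D2 ^ 4) * P36 ^ 4 = (D0 * D1 * D2) ^ 4 * P36 ^ 4 := by ring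
    _ = ((P12 * P12 ^ 3) / P36) ^ 4 * P36 ^ 4 := by rw [hD]
    _ = (P12 * P12 ^ 3) ^ 4 := by rw [div_pow, div_mul_cancel₀ _ (pow_ne_zero 4 h36ne)]
  have hζp : (ζ ^ 0 * ζ ^ 1 * ζ ^ 2 : ℂ) = 1 := by
    calc (ζ ^ 0 * ζ ^ 1 * ζ ^ 2 : ℂ) = ζ ^ (3 * 1) := by ring
    _ = 1 := hζ3 1
  rw [Finset.prod_range_succ, Finset.prod_range_succ, Finset.prod_range_one,
    key _ _ (hE 0), key _ _ (hE 1), key _ _ (hE 2), key _ _ hq,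
    hbody 0, hbody 1, hbody 2, hbodyR,
    hT0.tprod_eq, hT1.tprod_eq, hT2.tprod_eq, hTR.tprod_eq]
  calc x * ζ ^ 0 * (P12 ^ 4 * B0 ^ 2 / (P6 ^ 2 * D0 ^ 4)) *
      (x * ζ ^ 1 * (P12 ^ 4 * B1 ^ 2 / (P6 ^ 2 * D1 ^ 4))) *
      (x * ζ ^ 2 * (P12 ^ 4 * B2 ^ 2 / (P6 ^ 2 * D2 ^ 4)))
      = (ζ ^ 0 * ζ ^ 1 * ζ ^ 2 * x ^ 3 * (P12 ^ 12 * (B0 ^ 2 * B1 ^ 2 * B2 ^ 2))) /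
        (P6 ^ 6 * (D0 ^ 4 * D1 ^ 4 * D2 ^ 4)) := by ring
    _ = (x ^ 3 * (P36 ^ 4 * P6 ^ 2)) / (P18 ^ 2 * P12 ^ 4) := by
        rw [div_eq_div_iff
          (mul_ne_zero (pow_ne_zero 6 h6ne)
            (mul_ne_zero (mul_ne_zero (pow_ne_zero 4 hd0ne) (pow_ne_zero 4 hd1ne))
              (pow_ne_zero 4 hd2ne)))
          (mul_ne_zero (pow_ne_zero 2 h18ne) (pow_ne_zero 4 h12ne))]
        linear_combination (ζ ^ 0 * ζ ^ 1 * ζ ^ 2 * x ^ 3 * P12 ^ 16) * h1c +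
          (-(x ^ 3 * P6 ^ 8)) * h2c + (x ^ 3 * P12 ^ 16 * P6 ^ 8) * hζp
    _ = x ^ 3 * (P36 ^ 4 * P6 ^ 2 / (P18 ^ 2 * P12 ^ 4)) := by ring
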